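/- Let C = (ℕ×{1,2}) ∪ {(0,0)} ⊆ ℕ × {0,1,2}, equipped with the relations U₀∩C = {(0,0)}, U₁ = ℕ×{1}, U₂ = ℕ×{2}, N∩C² where N = {(u,v) ∈ (ℕ×{1})² ∪ (ℕ×{2})² : u ≠ v}, and R∩C² where R = {((n,0),(n,1)) : n ∈ ℕ} ∪ {((n,0),(n,2)) : n ∈ ℕ} ∪ {((0,0),(n,1)) : n ∈ ℕ} ∪ {((0,0),(n,2)) : n ∈ ℕ}. Then the complete first-order theory of this structure ℭ is not ℵ₁-categorical: there exist two models of Th(ℭ) of cardinality ℵ₁ that are not isomorphic. -/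
import Mathlib


open FirstOrder FirstOrder.Language

universe w

/-- The domain `ℕ × {0,1,2}`. -/
abbrev SpiderDom : Type := ℕ × Fin 3

/-- The relation `N`: pairs of distinct elements both in `ℕ×{1}` or both in `ℕ×{2}`. -/
def SpiderN (u v : SpiderDom) : Prop :=
  ((u.2 = 1 ∧ v.2 = 1) ∨ (u.2 = 2 ∧ v.2 = 2)) ∧ u ≠ v

/-- The relation `R`. -/
def SpiderR (u v : SpiderDom) : Prop :=
  (u.2 = 0 ∧ v.2 = 1 ∧ u.1 = v.1) ∨ (u.2 = 0 ∧ v.2 = 2 ∧ u.1 = v.1) ∨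
    (u = ((0 : ℕ), (0 : Fin 3)) ∧ v.2 = 1) ∨ (u = ((0 : ℕ), (0 : Fin 3)) ∧ v.2 = 2)

/-- The subset `C = (ℕ×{1,2}) ∪ {(0,0)}`. -/
def SpiderC : Set SpiderDom :=
  {p | p.2 = 1 ∨ p.2 = 2 ∨ p = ((0 : ℕ), (0 : Fin 3))}

/-- The relation symbols: three unary symbols (`U₀∩C`, `U₁`, `U₂`) and two binary symbols
(`N∩C²`, `R∩C²`). -/
def CoreRels : ℕ → Type
  | 1 => Fin 3
  | 2 => Fin 2
  | _ => Empty

/-- The language with three unary and two binary relation symbols. -/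
def CoreLang : FirstOrder.Language := ⟨fun _ => Empty, CoreRels⟩

/-- Interpretation of the unary relation symbols `U₀∩C`, `U₁`, `U₂` on `C`. -/
def coreUnary (r : Fin 3) (v : Fin 1 → ↥SpiderC) : Prop :=
  (v 0 : SpiderDom).2 = r

/-- Interpretation of the binary relation symbols `N∩C²`, `R∩C²` on `C`. -/
def coreBinary (r : Fin 2) (v : Fin 2 → ↥SpiderC) : Prop :=
  if r = 0 then SpiderN (v 0) (v 1) else SpiderR (v 0) (v 1)

/-- The interpretation of the relation symbols on `C`. -/
def coreRelInterp : ∀ n, CoreRels n → (Fin n → ↥SpiderC) → Prop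
  | 0, r, _ => r.elim
  | 1, r, v => coreUnary r v
  | 2, r, v => coreBinary r v
  | (_ + 3), r, _ => r.elim

/-- The structure `ℭ`. -/
instance : CoreLang.Structure ↥SpiderC where
  funMap := fun f _ => f.elim
  RelMap := fun {n} r v => coreRelInterp n r v

/-! ### Auxiliary development -/

section Spider

universe u v

/-- The canonical "unary part" interpretation. -/
def relUn {X : Type*} (p : X → Fin 3) (r : Fin 3) (v : Fin 1 → X) : Prop := p (v 0) = r

/-- The canonical "binary" interpretation: `N` and `R` in terms of parts. -/
def relBin {X : Type*} (p : X → Fin 3) (r : Fin 2) (v : Fin 2 → X) : Prop :=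
  if r = 0 then p (v 0) = p (v 1) ∧ p (v 0) ≠ 0 ∧ v 0 ≠ v 1
  else p (v 0) = 0 ∧ p (v 1) ≠ 0

/-- The canonical relation interpretation attached to a "part" map `p : X → Fin 3`. -/
def relOf {X : Type*} (p : X → Fin 3) : ∀ n, CoreRels n → (Fin n → X) → Prop
  | 0, r, _ => r.elim
  | 1, r, v => relUn p r v
  | 2, r, v => relBin p r v
  | (_ + 3), r, _ => r.elim

/-- The abstract spider: a spine point and two legs `α` and `β`. -/
abbrev Sp (α : Type u) (β : Type v) : Type (max u v) := α ⊕ β ⊕ PUnit.{max u v + 1}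

/-- The part of an element of the abstract spider. -/
def spart {α : Type u} {β : Type v} : Sp α β → Fin 3
  | .inl _ => 1
  | .inr (.inl _) => 2
  | .inr (.inr _) => 0

instance spStruct (α : Type u) (β : Type v) : CoreLang.Structure (Sp α β) where
  funMap := fun f _ => f.elim
  RelMap := fun {n} r v => relOf spart n r v

lemma relOf_comp_iff {X : Type*} {Y : Type*} (pX : X → Fin 3) (pY : Y → Fin 3) (F : X → Y)
    (hinj : Function.Injective F) (hF : ∀ x, pY (F x) = pX x) :
    ∀ n r (v : Fin n → X), relOf pY n r (F ∘ v) ↔ relOf pX n r v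
  | 0, r, _ => r.elim
  | 1, r, v => by simp [relOf, relUn, hF]
  | 2, r, v => by
      simp only [relOf, relBin, Function.comp_apply, hF, hinj.ne_iff]
  | (_ + 3), r, _ => r.elim

/-- Build a `CoreLang` equivalence out of a part-preserving bijection between
structures whose relations are the canonical ones. -/
def equivOfPart {X Y : Type*} [CoreLang.Structure X] [CoreLang.Structure Y]
    (pX : X → Fin 3) (pY : Y → Fin 3)
    (hX : ∀ n r (v : Fin n → X), Structure.RelMap (L := CoreLang) r v ↔ relOf pX n r v)
    (hY : ∀ n r (v : Fin n → Y), Structure.RelMap (L := CoreLang) r v ↔ relOf pY n r v)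
    (E : X ≃ Y) (hE : ∀ x, pY (E x) = pX x) : X ≃[CoreLang] Y where
  toEquiv := E
  map_fun' := fun f _ => f.elim
  map_rel' := fun {n} r v =>
    (hY n r _).trans ((relOf_comp_iff pX pY E E.injective hE n r v).trans (hX n r v).symm)

/-- The part map of `ℭ`. -/
def pC (p : ↥SpiderC) : Fin 3 := (p : SpiderDom).2

lemma spiderN_iff (u w : ↥SpiderC) :
    SpiderN (u : SpiderDom) (w : SpiderDom) ↔ (pC u = pC w ∧ pC u ≠ 0 ∧ u ≠ w) := by
  obtain ⟨u, hu⟩ := u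
  obtain ⟨w, hw⟩ := w
  simp only [SpiderN, pC, ne_eq, Subtype.mk.injEq]
  constructor
  · rintro ⟨(⟨h1, h2⟩ | ⟨h1, h2⟩), hne⟩ <;>
      exact ⟨by rw [h1, h2], by rw [h1]; decide, hne⟩
  · rintro ⟨heq, h0, hne⟩
    refine ⟨?_, hne⟩
    rcases hu with h | h | h
    · exact Or.inl ⟨h, heq ▸ h⟩
    · exact Or.inr ⟨h, heq ▸ h⟩
    · exact absurd (by rw [h]) h0

lemma spiderR_iff (u w : ↥SpiderC) :
    SpiderR (u : SpiderDom) (w : SpiderDom) ↔ (pC u = 0 ∧ pC w ≠ 0) := by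
  obtain ⟨u, hu⟩ := u
  obtain ⟨w, hw⟩ := w
  simp only [SpiderR, pC, ne_eq]
  constructor
  · rintro (⟨h1, h2, _⟩ | ⟨h1, h2, _⟩ | ⟨h1, h2⟩ | ⟨h1, h2⟩) <;>
      first
        | exact ⟨h1, by rw [h2]; decide⟩
        | exact ⟨by rw [h1], by rw [h2]; decide⟩
  · rintro ⟨h0, hw0⟩
    have hu0 : u = ((0 : ℕ), (0 : Fin 3)) := by
      rcases hu with h | h | h
      · exact absurd (h0 ▸ h) (by decide)
      · exact absurd (h0 ▸ h) (by decide)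
      · exact h
    rcases hw with h | h | h
    · exact Or.inr (Or.inr (Or.inl ⟨hu0, h⟩))
    · exact Or.inr (Or.inr (Or.inr ⟨hu0, h⟩))
    · exact absurd (by rw [h]) hw0

lemma coreBinary_iff (r : Fin 2) (v : Fin 2 → ↥SpiderC) :
    coreBinary r v ↔ relBin pC r v := by
  fin_cases r
  · simpa [coreBinary, relBin] using spiderN_iff (v 0) (v 1)
  · simpa [coreBinary, relBin] using spiderR_iff (v 0) (v 1)

lemma relMap_spiderC_iff :
    ∀ n r (v : Fin n → ↥SpiderC), Structure.RelMap (L := CoreLang) r v ↔ relOf pC n r v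
  | 0, r, _ => r.elim
  | 1, r, v => Iff.rfl
  | 2, r, v => coreBinary_iff r v
  | (_ + 3), r, _ => r.elim

lemma relMap_sp_iff {α : Type u} {β : Type v} :
    ∀ n r (v : Fin n → Sp α β), Structure.RelMap (L := CoreLang) r v ↔ relOf spart n r v :=
  fun _ _ _ => Iff.rfl

/-- The equivalence between the abstract spider on `ℕ, ℕ` and `ℭ`. -/
def spEquivC : Sp ℕ ℕ ≃[CoreLang] ↥SpiderC := by
  refine equivOfPart spart pC relMap_sp_iff relMap_spiderC_iff
    ⟨fun s => match s with
      | .inl n => ⟨(n, 1), Or.inl rfl⟩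
      | .inr (.inl n) => ⟨(n, 2), Or.inr (Or.inl rfl)⟩
      | .inr (.inr _) => ⟨((0 : ℕ), (0 : Fin 3)), Or.inr (Or.inr rfl)⟩,
     fun p => if (p : SpiderDom).2 = 1 then .inl (p : SpiderDom).1
       else if (p : SpiderDom).2 = 2 then .inr (.inl (p : SpiderDom).1)
       else .inr (.inr PUnit.unit),
     ?_, ?_⟩ ?_
  · rintro (n | n | u) <;> simp
  · rintro ⟨⟨p1, p2⟩, hp⟩
    rcases hp with h | h | h
    · exact Subtype.ext (by simp [show p2 = 1 from h])
    · exact Subtype.ext (by simp [show p2 = 2 from h])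
    · rw [Prod.mk.injEq] at h
      exact Subtype.ext (by simp [h.1, h.2])
  · rintro (n | n | u) <;> rfl

/-- Automorphisms of the abstract spider from permutations of the legs. -/
def spAut {α : Type u} {β : Type v} (σ : Equiv.Perm α) (τ : Equiv.Perm β) :
    Sp α β ≃[CoreLang] Sp α β :=
  equivOfPart spart spart relMap_sp_iff relMap_sp_iff
    (σ.sumCongr (τ.sumCongr (Equiv.refl _)))
    (by rintro (a | b | u) <;> rfl)

/-- The map of a pair of leg embeddings on spiders. -/
def smap {α : Type u} {β : Type v} (f : ℕ → α) (g : ℕ → β) : Sp ℕ ℕ → Sp α β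
  | .inl n => .inl (f n)
  | .inr (.inl n) => .inr (.inl (g n))
  | .inr (.inr _) => .inr (.inr PUnit.unit)

lemma smap_injective {α : Type u} {β : Type v} (f : ℕ ↪ α) (g : ℕ ↪ β) :
    Function.Injective (smap f g) := by
  rintro (m | m | u) (m' | m' | u') h <;> simp only [smap] at h <;> simp_all

lemma smap_part {α : Type u} {β : Type v} (f : ℕ → α) (g : ℕ → β) (s : Sp ℕ ℕ) :
    spart (smap f g s) = spart s := by
  rcases s with n | n | u <;> rfl

/-- The spider embedding as a `CoreLang` embedding. -/
def spEmb {α : Type u} {β : Type v} (f : ℕ ↪ α) (g : ℕ ↪ β) : Sp ℕ ℕ ↪[CoreLang] Sp α β where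
  toEmbedding := ⟨smap f g, smap_injective f g⟩
  map_fun' := fun F _ => F.elim
  map_rel' := fun {n} r v =>
    relOf_comp_iff spart spart (smap f g) (smap_injective f g) (smap_part f g) n r v

lemma spEmb_apply {α : Type u} {β : Type v} (f : ℕ ↪ α) (g : ℕ ↪ β) (s : Sp ℕ ℕ) :
    spEmb f g s = smap f g s := rfl

/-- helper: a ℕ-valued key for elements of `Sp ℕ ℕ`. -/
def skey : Sp ℕ ℕ → ℕ
  | .inl n => n
  | .inr (.inl n) => n
  | .inr (.inr _) => 0

end Spider

section TV

universe u v

open Cardinal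

variable {α : Type u} {β : Type v}

lemma realize_fix_equiv {n : ℕ} (G : Sp α β ≃[CoreLang] Sp α β)
    (φ : CoreLang.BoundedFormula Empty n) {xs ys : Fin n → Sp α β}
    (h : φ.Realize default xs) (hxy : ⇑G ∘ xs = ys) : φ.Realize default ys := by
  have h2 := (StrongHomClass.realize_boundedFormula G φ (v := default) (xs := xs)).2 h
  rwa [show ⇑G ∘ (default : Empty → Sp α β) = default from funext (fun e => e.elim), hxy] at h2

lemma sp_tv (f : ℕ ↪ α) (g : ℕ ↪ β) (n : ℕ) (φ : CoreLang.BoundedFormula Empty (n + 1))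
    (x : Fin n → Sp ℕ ℕ) (a : Sp α β)
    (h : φ.Realize default (Fin.snoc (⇑(spEmb f g) ∘ x) a)) :
    ∃ b, φ.Realize default (Fin.snoc (⇑(spEmb f g) ∘ x) (spEmb f g b)) := by
  classical
  obtain ⟨k, hk⟩ := Infinite.exists_notMem_finset (Finset.univ.image (skey ∘ x))
  have hkey : ∀ i m, x i = .inl m → m ≠ k := by
    intro i m hx hmk
    exact hk (Finset.mem_image.2 ⟨i, Finset.mem_univ i, by
      simp [Function.comp, hx, skey, hmk]⟩)
  have hkey2 : ∀ i m, x i = .inr (.inl m) → m ≠ k := by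
    intro i m hx hmk
    exact hk (Finset.mem_image.2 ⟨i, Finset.mem_univ i, by
      simp [Function.comp, hx, skey, hmk]⟩)
  rcases a with a0 | a0 | u
  · by_cases ha : ∃ m, f m = a0
    · obtain ⟨m, hm⟩ := ha
      exact ⟨.inl m, by rwa [show spEmb f g (.inl m) = .inl a0 from congrArg Sum.inl hm]⟩
    · refine ⟨.inl k, realize_fix_equiv (spAut (Equiv.swap a0 (f k)) (Equiv.refl β)) φ h ?_⟩
      funext i
      refine Fin.lastCases ?_ (fun j => ?_) i
      · simp only [Function.comp_apply, Fin.snoc_last]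
        show Sum.inl (Equiv.swap a0 (f k) a0) = spEmb f g (Sum.inl k)
        rw [Equiv.swap_apply_left]
        rfl
      · simp only [Function.comp_apply, Fin.snoc_castSucc]
        rcases hx : x j with m | m | u
        · show Sum.inl (Equiv.swap a0 (f k) (f m)) = Sum.inl (f m)
          rw [Equiv.swap_apply_of_ne_of_ne (fun he => ha ⟨m, he⟩)
            (f.injective.ne (hkey j m hx))]
        · rfl
        · rfl
  · by_cases ha : ∃ m, g m = a0
    · obtain ⟨m, hm⟩ := ha
      exact ⟨.inr (.inl m),
        by rwa [show spEmb f g (.inr (.inl m)) = .inr (.inl a0) from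
          congrArg (fun z => Sum.inr (Sum.inl z)) hm]⟩
    · refine ⟨.inr (.inl k),
        realize_fix_equiv (spAut (Equiv.refl α) (Equiv.swap a0 (g k))) φ h ?_⟩
      funext i
      refine Fin.lastCases ?_ (fun j => ?_) i
      · simp only [Function.comp_apply, Fin.snoc_last]
        show Sum.inr (Sum.inl (Equiv.swap a0 (g k) a0)) = spEmb f g (.inr (.inl k))
        rw [Equiv.swap_apply_left]
        rfl
      · simp only [Function.comp_apply, Fin.snoc_castSucc]
        rcases hx : x j with m | m | u
        · rfl
        · show Sum.inr (Sum.inl (Equiv.swap a0 (g k) (g m))) = Sum.inr (Sum.inl (g m))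
          rw [Equiv.swap_apply_of_ne_of_ne (fun he => ha ⟨m, he⟩)
            (g.injective.ne (hkey2 j m hx))]
        · rfl
  · exact ⟨.inr (.inr PUnit.unit), by cases u; exact h⟩

/-- Any abstract spider with embedded countable legs is elementarily equivalent to `Sp ℕ ℕ`. -/
noncomputable def spElemEquiv (f : ℕ ↪ α) (g : ℕ ↪ β) :
    (Sp ℕ ℕ) ≅[CoreLang] (Sp α β) :=
  ((spEmb f g).toElementaryEmbedding (sp_tv f g)).elementarilyEquivalent

lemma sp_equiv_C (f : ℕ ↪ α) (g : ℕ ↪ β) : (Sp α β) ≅[CoreLang] ↥SpiderC :=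
  (spElemEquiv f g).symm.trans spEquivC.toElementaryEmbedding.elementarilyEquivalent

lemma sp_model (f : ℕ ↪ α) (g : ℕ ↪ β) :
    (Sp α β) ⊨ (CoreLang.completeTheory ↥SpiderC) :=
  Theory.model_iff_subset_completeTheory.2 (sp_equiv_C f g).completeTheory_eq.superset

lemma sp_part_one {α' : Type*} {β' : Type*} (E : Sp α β ≃[CoreLang] Sp α' β') (x : α) :
    ∃ u, E (.inl x) = .inl u := by
  have h := E.map_rel (show CoreLang.Relations 1 from (1 : Fin 3)) ![Sum.inl x]
  have h2 : spart (E (.inl x)) = 1 := h.2 rfl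
  rcases hE : E (.inl x) with u | u | u
  · exact ⟨u, rfl⟩
  · rw [hE] at h2; simp [spart] at h2
  · rw [hE] at h2; simp [spart] at h2

end TV

/-- The theory of `ℭ` is not ℵ₁-categorical: there are two models of `Th(ℭ)` of
cardinality ℵ₁ that are not isomorphic. -/
theorem core_not_aleph_one_categorical :
    ∃ (M N : Type w) (iM : CoreLang.Structure M) (iN : CoreLang.Structure N),
      @Theory.Model CoreLang M iM (CoreLang.completeTheory ↥SpiderC) ∧
      @Theory.Model CoreLang N iN (CoreLang.completeTheory ↥SpiderC) ∧
      Cardinal.mk M = Cardinal.aleph 1 ∧ Cardinal.mk N = Cardinal.aleph 1 ∧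
      IsEmpty (@FirstOrder.Language.Equiv CoreLang M N iM iN) := by
  let A : Type w := (Cardinal.aleph 1 : Cardinal.{w}).out
  haveI hA : Infinite A :=
    Cardinal.infinite_iff.2 (by rw [Cardinal.mk_out]; exact Cardinal.aleph0_le_aleph 1)
  have hAcard : Cardinal.mk A = Cardinal.aleph 1 := Cardinal.mk_out _
  have h0 : Cardinal.aleph0 ≤ Cardinal.aleph 1 := Cardinal.aleph0_le_aleph 1
  let fA : ℕ ↪ A := Infinite.natEmbedding A
  let fU : ℕ ↪ ULift.{w} ℕ := ⟨ULift.up, fun a b h => congrArg ULift.down h⟩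
  refine ⟨Sp A A, Sp (ULift.{w} ℕ) A, spStruct A A, spStruct (ULift.{w} ℕ) A,
    sp_model fA fA, sp_model fU fA, ?_, ?_, ?_⟩
  · show (Cardinal.mk (A ⊕ A ⊕ PUnit.{w+1})) = _
    simp only [Cardinal.mk_sum, Cardinal.mk_punit, Cardinal.lift_id, Cardinal.lift_one]
    rw [hAcard,
      Cardinal.add_eq_left h0 (le_trans Cardinal.one_le_aleph0 h0),
      Cardinal.add_eq_left h0 le_rfl]
  · show (Cardinal.mk (ULift.{w} ℕ ⊕ A ⊕ PUnit.{w+1})) = _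
    simp only [Cardinal.mk_sum, Cardinal.mk_punit, Cardinal.lift_id, Cardinal.lift_one,
      Cardinal.mk_uLift, Cardinal.mk_nat, Cardinal.lift_aleph0]
    rw [hAcard, Cardinal.add_eq_left h0 (le_trans Cardinal.one_le_aleph0 h0),
      Cardinal.add_eq_right h0 h0]
  · refine ⟨fun E => ?_⟩
    have key := sp_part_one E
    have Finj : Function.Injective (fun x : A => (key x).choose) := by
      intro x y hxy
      have hx := (key x).choose_spec
      have hy := (key y).choose_spec
      have hxy' : E (.inl x) = E (.inl y) := by
        rw [hx, hy]; exact congrArg Sum.inl hxy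
      exact Sum.inl_injective (EquivLike.injective E hxy')
    have hle : (Cardinal.aleph 1 : Cardinal.{w}) ≤ Cardinal.aleph0 := by
      calc Cardinal.aleph 1 = Cardinal.mk A := hAcard.symm
        _ ≤ Cardinal.mk (ULift.{w} ℕ) := Cardinal.mk_le_of_injective Finj
        _ = Cardinal.aleph0 := by rw [Cardinal.mk_uLift, Cardinal.mk_nat, Cardinal.lift_aleph0]
    exact absurd hle (not_le.2 Cardinal.aleph0_lt_aleph_one)
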